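/- arXiv:1301.1067 — 2 statements merged into one kernel-verified Lean document; each statement's English description precedes it below -/
import Mathlib

section
/- The Levi graph of the configuration obtained by V-construction from the Odd graph O_n is isomorphic to the middle-levels (revolving door) graph: the bipartite graph on n-subsets and (n-1)-subsets of a (2n-1)-set with adjacency given by containment. -/
/-- The Odd graph `O_n`: the Kneser graph `K(2n-1, n-1)`, whose vertices are the
`(n-1)`-element subsets of a `(2n-1)`-element set, two vertices adjacent iff disjoint. -/
def oddGraph (n : ℕ) : SimpleGraph {A : Finset (Fin (2 * n - 1)) // A.card = n - 1} where
  Adj u v := u ≠ v ∧ Disjoint u.1 v.1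
  symm := ⟨fun _ _ h => ⟨h.1.symm, h.2.symm⟩⟩
  loopless := ⟨fun _ h => h.1 rfl⟩

/-- The Levi graph of the configuration `N(G)` obtained from `G` by the V-construction:
a bipartite graph on points (vertices `u` of `G`) and blocks (neighbourhoods `N(v)`),
with point `u` adjacent to block `N(v)` iff `u ∈ N(v)`, i.e. iff `u ~ v` in `G`. -/
def leviGraph {V : Type*} (G : SimpleGraph V) : SimpleGraph (V ⊕ V) where
  Adj x y := match x, y with
    | Sum.inl u, Sum.inr v => G.Adj u v
    | Sum.inr v, Sum.inl u => G.Adj u v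
    | _, _ => False
  symm := ⟨by rintro (u | u) (v | v) h <;> simp_all⟩
  loopless := ⟨by rintro (u | u) h <;> exact h⟩

/-- The middle-levels (revolving door) graph of a `(2n-1)`-set: vertices are the subsets of
size `n` or `n-1`, two vertices adjacent iff one is (strictly) contained in the other. -/
def middleLevels (n : ℕ) :
    SimpleGraph {A : Finset (Fin (2 * n - 1)) // A.card = n ∨ A.card = n - 1} where
  Adj u v := u.1 ⊂ v.1 ∨ v.1 ⊂ u.1
  symm := ⟨fun _ _ h => h.symm⟩
  loopless := ⟨fun _ h => h.elim (fun h => ssubset_irrefl _ h) (fun h => ssubset_irrefl _ h)⟩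

/-!
Send a point `u` of `O_n` to the `(n-1)`-set `u` and a block `N(v)` to the `n`-set `vᶜ`. Two
`(n-1)`-sets are disjoint iff `u ⊆ vᶜ`, and as `|u| < |vᶜ|` this inclusion is strict; disjoint
nonempty sets are distinct, which is where `n ≥ 2` enters. Sets of equal size are never strictly
nested, so there are no edges within either side.
-/

open Finset

namespace Finset

variable {α : Type*}

theorem ssubset_or_ssubset_iff_subset_of_card_lt {A B : Finset α} (h : #A < #B) :
    (A ⊂ B ∨ B ⊂ A) ↔ A ⊆ B := by
  refine ⟨fun hAB => hAB.elim (·.subset) fun hBA => ?_, fun hAB => .inl ?_⟩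
  · exact absurd (card_lt_card hBA) h.not_gt
  · exact ssubset_iff_subset_ne.2 ⟨hAB, by rintro rfl; exact h.false⟩

theorem not_ssubset_or_ssubset_of_card_eq {A B : Finset α} (h : #A = #B) :
    ¬(A ⊂ B ∨ B ⊂ A) := by
  rintro (hAB | hBA)
  · exact (card_lt_card hAB).ne h
  · exact (card_lt_card hBA).ne h.symm

variable [Fintype α] [DecidableEq α]

theorem ssubset_compl_or_compl_ssubset_iff {A B : Finset α} (hA : A.Nonempty)
    (hcard : #A + #B < Fintype.card α) :
    (A ⊂ Bᶜ ∨ Bᶜ ⊂ A) ↔ A ≠ B ∧ Disjoint A B := by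
  have hlt : #A < #Bᶜ := by rw [card_compl]; omega
  rw [ssubset_or_ssubset_iff_subset_of_card_lt hlt, subset_compl_iff_disjoint_right]
  exact ⟨fun hd => ⟨hd.ne hA.ne_empty, hd⟩, And.right⟩

def complCardEquiv {k l : ℕ} (h : k + l = Fintype.card α) :
    {A : Finset α // #A = k} ≃ {A : Finset α // #A = l} :=
  (compl_involutive.toPerm _).subtypeEquiv fun A => by
    have := card_le_univ A
    rw [Function.Involutive.coe_toPerm, card_compl]; omega

end Finset

/-- The point `inl u` goes to the `(n-1)`-set `u`, the block `inr v` to the `n`-set `vᶜ`. -/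
def leviOddGraphEquiv (n : ℕ) (hn : 1 ≤ n) :
    {A : Finset (Fin (2 * n - 1)) // #A = n - 1} ⊕
        {A : Finset (Fin (2 * n - 1)) // #A = n - 1} ≃
      {A : Finset (Fin (2 * n - 1)) // #A = n ∨ #A = n - 1} :=
  (Equiv.sumComm _ _).trans <|
    ((complCardEquiv (by rw [Fintype.card_fin]; omega)).sumCongr (Equiv.refl _)).trans <|
      (subtypeOrEquiv _ _ <| disjoint_iff_inf_le.2 fun _ ⟨hA, hA'⟩ =>
        absurd (hA.symm.trans hA') (by omega)).symm

theorem oddGraph_adj_iff_ssubset_compl {n : ℕ} (hn : 2 ≤ n)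
    {u v : {A : Finset (Fin (2 * n - 1)) // #A = n - 1}} :
    (oddGraph n).Adj u v ↔ u.1 ⊂ v.1ᶜ ∨ v.1ᶜ ⊂ u.1 := by
  have hu : u.1.Nonempty := card_pos.1 (by omega)
  rw [ssubset_compl_or_compl_ssubset_iff hu
    (by rw [u.2, v.2, Fintype.card_fin]; omega), ← Subtype.ext_iff.ne]
  rfl

/-- The Levi graph of the configuration obtained by the V-construction from the Odd graph
`O_n` (`n ≥ 2`) is isomorphic to the middle-levels graph: the bipartite graph on the
`n`-subsets and `(n-1)`-subsets of a `(2n-1)`-set with adjacency given by containment. -/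
theorem stmt_9 (n : ℕ) (hn : 2 ≤ n) :
    Nonempty (leviGraph (oddGraph n) ≃g middleLevels n) := by
  refine ⟨⟨leviOddGraphEquiv n (by omega), ?_⟩⟩
  rintro (u | u) (v | v)
  · exact iff_of_false (not_ssubset_or_ssubset_of_card_eq (u.2.trans v.2.symm)) id
  · exact (oddGraph_adj_iff_ssubset_compl hn).symm
  · exact or_comm.trans (oddGraph_adj_iff_ssubset_compl hn).symm
  · refine iff_of_false (not_ssubset_or_ssubset_of_card_eq ?_) id
    show #u.1ᶜ = #v.1ᶜ
    rw [card_compl, card_compl, u.2, v.2]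
end

section
/- Wallace–Steiner point theorem: Given four lines in the Euclidean plane in general position (no two parallel, no three concurrent), the circumcircles of the four triangles formed by taking the lines three at a time pass through a common point. -/
/-- Given four lines indexed by `Fin 4` and a symmetric family `p i j` of pairwise
intersection points, `steinerVtx p i m` is the `m`-th vertex of the triangle formed by the
three lines other than line `i`: the intersection point of two of those three lines. -/
noncomputable def steinerVtx (p : Fin 4 → Fin 4 → EuclideanSpace ℝ (Fin 2))
    (i : Fin 4) (m : Fin 3) : EuclideanSpace ℝ (Fin 2) :=
  p (i.succAbove (m.succAbove 0)) (i.succAbove (m.succAbove 1))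


/-!
Label the six intersection points so that the lines are `ABC`, `ADE`, `BDF`, `CEF` and the
triangles are `DEF`, `BCF`, `ACE`, `ABD`. The circles through `DEF` and `BCF` are not tangent
at `F`, so they meet again at a point `q`. With oriented angles modulo `π`,
`∡EqC = ∡EqF + ∡FqC = ∡EDF + ∡FBC = ∡EAC`: inscribed angles, then additivity of the angles
between the lines `ADE`, `BDF`, `ABC`. Hence `q` lies on the circle through `ACE`, and by the
symmetry `B ↔ C`, `D ↔ E` on the circle through `ABD`.
-/

open EuclideanGeometry Module

section Collinear

variable {k V P : Type*} [Field k] [AddCommGroup V] [Module k V] [AddTorsor V P]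

theorem Collinear.exists_vsub_eq_smul_vsub {s : Set P} (h : Collinear k s) {p₁ p₂ p₃ p₄ : P}
    (hp₁ : p₁ ∈ s) (hp₂ : p₂ ∈ s) (hp₃ : p₃ ∈ s) (hp₄ : p₄ ∈ s) (hp₁p₂ : p₁ ≠ p₂)
    (hp₃p₄ : p₃ ≠ p₄) : ∃ r : k, r ≠ 0 ∧ p₁ -ᵥ p₂ = r • (p₃ -ᵥ p₄) := by
  obtain ⟨v, hv⟩ := (collinear_iff_of_mem hp₄).1 h
  obtain ⟨r₁, rfl⟩ := hv p₁ hp₁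
  obtain ⟨r₂, rfl⟩ := hv p₂ hp₂
  obtain ⟨r₃, rfl⟩ := hv p₃ hp₃
  have h₁₂ : r₁ - r₂ ≠ 0 := fun h ↦ hp₁p₂ (by rw [sub_eq_zero.1 h])
  have h₃ : r₃ ≠ 0 := fun h ↦ hp₃p₄ (by simp [h])
  refine ⟨(r₁ - r₂) / r₃, div_ne_zero h₁₂ h₃, ?_⟩
  rw [vadd_vsub_vadd_cancel_right, vadd_vsub, ← sub_smul, smul_smul, div_mul_cancel₀ _ h₃]

theorem not_collinear_of_mem_of_notMem {L : AffineSubspace k P} {p₁ p₂ p₃ : P} (hp₁ : p₁ ∈ L)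
    (hp₂ : p₂ ∈ L) (hp₃ : p₃ ∉ L) (hp₁p₂ : p₁ ≠ p₂) : ¬Collinear k ({p₁, p₂, p₃} : Set P) :=
  fun h ↦ hp₃ <| affineSpan_pair_le_of_mem_of_mem hp₁ hp₂ <|
    h.mem_affineSpan_of_mem_of_ne (by simp) (by simp) (by simp) hp₁p₂

end Collinear

variable {V P : Type*} [NormedAddCommGroup V] [InnerProductSpace ℝ V] [MetricSpace P]
  [NormedAddTorsor V P]

namespace EuclideanGeometry.Sphere

theorem not_collinear_of_mem {ω : Sphere P} {p₁ p₂ p₃ : P} (hp₁ : p₁ ∈ ω) (hp₂ : p₂ ∈ ω)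
    (hp₃ : p₃ ∈ ω) (hp₁p₂ : p₁ ≠ p₂) (hp₁p₃ : p₁ ≠ p₃) (hp₂p₃ : p₂ ≠ p₃) :
    ¬Collinear ℝ ({p₁, p₂, p₃} : Set P) := by
  have hcos : Cospherical ({p₁, p₂, p₃} : Set P) :=
    cospherical_iff_exists_sphere.2 ⟨ω, by simp [Set.insert_subset_iff, hp₁, hp₂, hp₃]⟩
  rw [← affineIndependent_iff_not_collinear_set]
  exact hcos.affineIndependent_of_ne hp₁p₂ hp₁p₃ hp₂p₃

theorem exists_mem_ne_of_not_collinear_center {ω₁ ω₂ : Sphere P} {p : P} (hp₁ : p ∈ ω₁)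
    (hp₂ : p ∈ ω₂) (h : ¬Collinear ℝ ({p, ω₁.center, ω₂.center} : Set P)) :
    ∃ q, q ∈ ω₁ ∧ q ∈ ω₂ ∧ q ≠ p := by
  have : Nonempty line[ℝ, ω₁.center, ω₂.center] := ⟨⟨_, left_mem_affineSpan_pair ℝ _ _⟩⟩
  refine ⟨reflection line[ℝ, ω₁.center, ω₂.center] p, ?_, ?_, ?_⟩
  · rw [mem_sphere', dist_reflection_eq_of_mem _ (left_mem_affineSpan_pair ℝ _ _)]
    exact mem_sphere'.1 hp₁
  · rw [mem_sphere', dist_reflection_eq_of_mem _ (right_mem_affineSpan_pair ℝ _ _)]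
    exact mem_sphere'.1 hp₂
  · rw [Ne, reflection_eq_self_iff]
    exact fun hmem ↦ h (collinear_insert_of_mem_affineSpan_pair hmem)

end EuclideanGeometry.Sphere

section TwoDim

variable [Fact (finrank ℝ V = 2)]

attribute [local instance] FiniteDimensional.of_fact_finrank_eq_two

section Oriented

variable [Module.Oriented ℝ V (Fin 2)]

theorem EuclideanGeometry.Sphere.mem_of_two_zsmul_oangle_eq {ω : Sphere P} {p₁ p₂ p₃ p : P}
    (hp₁ : p₁ ∈ ω) (hp₂ : p₂ ∈ ω) (hp₃ : p₃ ∈ ω) (hn : ¬Collinear ℝ ({p₁, p₂, p₃} : Set P))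
    (h : (2 : ℤ) • ∡ p₁ p p₃ = (2 : ℤ) • ∡ p₁ p₂ p₃) : p ∈ ω := by
  obtain ⟨ω', hω'⟩ := cospherical_iff_exists_sphere.1
    (cospherical_of_two_zsmul_oangle_eq_of_not_collinear h.symm hn)
  simp only [Set.insert_subset_iff, Set.singleton_subset_iff, Sphere.mem_coe] at hω'
  obtain ⟨hp₁', hp₂', hp', hp₃'⟩ := hω'
  obtain rfl : ω' = ω := by
    by_contra hne
    rcases eq_of_mem_sphere_of_mem_sphere_of_finrank_eq_two Fact.out hne (ne₁₂_of_not_collinear hn)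
      hp₁' hp₂' hp₃' hp₁ hp₂ hp₃ with h₃ | h₃
    · exact ne₁₃_of_not_collinear hn h₃.symm
    · exact ne₂₃_of_not_collinear hn h₃.symm
  exact hp'

/-- Angles between lines add up: for lines `wux`, `vuy` and `wvz`,
`∠(wux, vuy) + ∠(vuy, wvz) = ∠(wux, wvz)` modulo `π`. -/
theorem two_zsmul_oangle_add_two_zsmul_oangle_of_collinear {x u y v z w : P}
    (hwux : Collinear ℝ ({w, u, x} : Set P)) (hvuy : Collinear ℝ ({v, u, y} : Set P))
    (hwvz : Collinear ℝ ({w, v, z} : Set P)) (hxu : x ≠ u) (hxw : x ≠ w) (hyu : y ≠ u)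
    (hyv : y ≠ v) (hzv : z ≠ v) (hzw : z ≠ w) :
    (2 : ℤ) • ∡ x u y + (2 : ℤ) • ∡ y v z = (2 : ℤ) • ∡ x w z := by
  obtain ⟨a, ha, hx⟩ :=
    hwux.exists_vsub_eq_smul_vsub (by simp) (by simp) (by simp) (by simp) hxu hxw
  obtain ⟨b, hb, hy⟩ :=
    hvuy.exists_vsub_eq_smul_vsub (by simp) (by simp) (by simp) (by simp) hyu hyv
  obtain ⟨c, hc, hz⟩ :=
    hwvz.exists_vsub_eq_smul_vsub (by simp) (by simp) (by simp) (by simp) hzv hzw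
  simp only [oangle]
  rw [hx, hy, hz, positiveOrientation.two_zsmul_oangle_smul_left_of_ne_zero _ _ ha,
    positiveOrientation.two_zsmul_oangle_smul_right_of_ne_zero _ _ hb,
    positiveOrientation.two_zsmul_oangle_smul_right_of_ne_zero _ _ hc, ← smul_add,
    positiveOrientation.oangle_add (vsub_ne_zero.2 hxw) (vsub_ne_zero.2 hyv) (vsub_ne_zero.2 hzw)]

variable {A B C D E F : P} {ω₀ ω₁ ω₂ : Sphere P}

/-- If `ω₀` and `ω₁` were tangent at `F`, the centre–inscribed angle relation in each circle
would make the lines `ADE` and `ABC` parallel. -/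
theorem not_collinear_centers_of_complete_quadrilateral (hABC : Collinear ℝ ({A, B, C} : Set P))
    (hADE : Collinear ℝ ({A, D, E} : Set P)) (hBDF : Collinear ℝ ({B, D, F} : Set P))
    (hCEF : Collinear ℝ ({C, E, F} : Set P)) (hDEF : ¬Collinear ℝ ({D, E, F} : Set P))
    (hBCF : ¬Collinear ℝ ({B, C, F} : Set P)) (hABD : ¬Collinear ℝ ({A, B, D} : Set P))
    (hD₀ : D ∈ ω₀) (hE₀ : E ∈ ω₀) (hF₀ : F ∈ ω₀) (hB₁ : B ∈ ω₁) (hC₁ : C ∈ ω₁) (hF₁ : F ∈ ω₁) :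
    ¬Collinear ℝ ({F, ω₀.center, ω₁.center} : Set P) := by
  intro hcol
  have h₀ := Sphere.two_zsmul_oangle_center_add_two_zsmul_oangle_eq_pi hF₀ hE₀ hD₀
    (ne₂₃_of_not_collinear hDEF) (ne₁₂_of_not_collinear hDEF).symm
    (ne₁₃_of_not_collinear hDEF).symm
  have h₁ := Sphere.two_zsmul_oangle_center_add_two_zsmul_oangle_eq_pi hF₁ hC₁ hB₁
    (ne₂₃_of_not_collinear hBCF) (ne₁₂_of_not_collinear hBCF).symm
    (ne₁₃_of_not_collinear hBCF).symm
  have hF : (2 : ℤ) • ∡ D F ω₀.center = (2 : ℤ) • ∡ B F ω₁.center := by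
    rw [Collinear.two_zsmul_oangle_eq_left (hBDF.subset (by simp [Set.insert_subset_iff]))
        (ne₁₃_of_not_collinear hDEF) (ne₁₃_of_not_collinear hBCF),
      Collinear.two_zsmul_oangle_eq_right (hcol.subset (by simp [Set.insert_subset_iff]))
        (Sphere.ne_center_of_mem_of_mem_of_ne hF₀ hD₀ (ne₁₃_of_not_collinear hDEF).symm).symm
        (Sphere.ne_center_of_mem_of_mem_of_ne hF₁ hB₁ (ne₁₃_of_not_collinear hBCF).symm).symm]
  have hEC : (2 : ℤ) • ∡ F E D = (2 : ℤ) • ∡ F C B := by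
    rw [← hF] at h₁
    exact add_left_cancel (h₀.trans h₁.symm)
  have hA : (2 : ℤ) • ∡ F E D + (2 : ℤ) • ∡ D A B = (2 : ℤ) • ∡ F C B :=
    two_zsmul_oangle_add_two_zsmul_oangle_of_collinear hCEF
      (hADE.subset (by simp [Set.insert_subset_iff]))
      (hABC.subset (by simp [Set.insert_subset_iff]))
      (ne₂₃_of_not_collinear hDEF).symm (ne₂₃_of_not_collinear hBCF).symm
      (ne₁₂_of_not_collinear hDEF) (ne₁₃_of_not_collinear hABD).symm
      (ne₁₂_of_not_collinear hABD).symm (ne₁₂_of_not_collinear hBCF)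
  rw [hEC, add_eq_left, Real.Angle.two_zsmul_eq_zero_iff] at hA
  exact hABD ((oangle_eq_zero_or_eq_pi_iff_collinear.1 hA).subset
    (by simp [Set.insert_subset_iff]))

theorem mem_sphere_of_complete_quadrilateral (hABC : Collinear ℝ ({A, B, C} : Set P))
    (hADE : Collinear ℝ ({A, D, E} : Set P)) (hBDF : Collinear ℝ ({B, D, F} : Set P))
    (hCEF : Collinear ℝ ({C, E, F} : Set P)) (hDEF : ¬Collinear ℝ ({D, E, F} : Set P))
    (hBCF : ¬Collinear ℝ ({B, C, F} : Set P)) (hACE : ¬Collinear ℝ ({A, C, E} : Set P))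
    (hD₀ : D ∈ ω₀) (hE₀ : E ∈ ω₀) (hF₀ : F ∈ ω₀) (hB₁ : B ∈ ω₁) (hC₁ : C ∈ ω₁) (hF₁ : F ∈ ω₁)
    (hA₂ : A ∈ ω₂) (hC₂ : C ∈ ω₂) (hE₂ : E ∈ ω₂) {q : P} (hq₀ : q ∈ ω₀) (hq₁ : q ∈ ω₁)
    (hqF : q ≠ F) : q ∈ ω₂ := by
  have hqE : q ≠ E := by
    rintro rfl
    exact Sphere.not_collinear_of_mem hC₁ hq₁ hF₁ (ne₂₃_of_not_collinear hACE)
      (ne₂₃_of_not_collinear hBCF) hqF hCEF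
  have hqC : q ≠ C := by
    rintro rfl
    exact Sphere.not_collinear_of_mem hq₀ hE₀ hF₀ (ne₂₃_of_not_collinear hACE)
      (ne₂₃_of_not_collinear hBCF) (ne₂₃_of_not_collinear hDEF) hCEF
  have hE : (2 : ℤ) • ∡ E q F = (2 : ℤ) • ∡ E D F :=
    Sphere.two_zsmul_oangle_eq hE₀ hq₀ hD₀ hF₀ hqE hqF (ne₁₂_of_not_collinear hDEF)
      (ne₁₃_of_not_collinear hDEF)
  have hC : (2 : ℤ) • ∡ F q C = (2 : ℤ) • ∡ F B C :=
    Sphere.two_zsmul_oangle_eq hF₁ hq₁ hB₁ hC₁ hqF hqC (ne₁₃_of_not_collinear hBCF)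
      (ne₁₂_of_not_collinear hBCF)
  have hA : (2 : ℤ) • ∡ E D F + (2 : ℤ) • ∡ F B C = (2 : ℤ) • ∡ E A C :=
    two_zsmul_oangle_add_two_zsmul_oangle_of_collinear hADE hBDF hABC
      (ne₁₂_of_not_collinear hDEF).symm (ne₁₃_of_not_collinear hACE).symm
      (ne₁₃_of_not_collinear hDEF).symm (ne₁₃_of_not_collinear hBCF).symm
      (ne₁₂_of_not_collinear hBCF).symm (ne₁₂_of_not_collinear hACE).symm
  refine Sphere.mem_of_two_zsmul_oangle_eq hE₂ hA₂ hC₂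
    (fun h ↦ hACE (h.subset (by simp [Set.insert_subset_iff]))) ?_
  rw [← oangle_add hqE.symm hqF.symm hqC.symm, smul_add, hE, hC, hA]

end Oriented

theorem exists_mem_spheres_of_complete_quadrilateral {A B C D E F : P} {ω₀ ω₁ ω₂ ω₃ : Sphere P}
    (hABC : Collinear ℝ ({A, B, C} : Set P)) (hADE : Collinear ℝ ({A, D, E} : Set P))
    (hBDF : Collinear ℝ ({B, D, F} : Set P)) (hCEF : Collinear ℝ ({C, E, F} : Set P))
    (hDEF : ¬Collinear ℝ ({D, E, F} : Set P)) (hBCF : ¬Collinear ℝ ({B, C, F} : Set P))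
    (hACE : ¬Collinear ℝ ({A, C, E} : Set P)) (hABD : ¬Collinear ℝ ({A, B, D} : Set P))
    (hD₀ : D ∈ ω₀) (hE₀ : E ∈ ω₀) (hF₀ : F ∈ ω₀) (hB₁ : B ∈ ω₁) (hC₁ : C ∈ ω₁) (hF₁ : F ∈ ω₁)
    (hA₂ : A ∈ ω₂) (hC₂ : C ∈ ω₂) (hE₂ : E ∈ ω₂) (hA₃ : A ∈ ω₃) (hB₃ : B ∈ ω₃) (hD₃ : D ∈ ω₃) :
    ∃ q, q ∈ ω₀ ∧ q ∈ ω₁ ∧ q ∈ ω₂ ∧ q ∈ ω₃ := by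
  let _ : Module.Oriented ℝ V (Fin 2) := ⟨(Module.finBasisOfFinrankEq ℝ V Fact.out).orientation⟩
  obtain ⟨q, hq₀, hq₁, hqF⟩ := Sphere.exists_mem_ne_of_not_collinear_center hF₀ hF₁ <|
    not_collinear_centers_of_complete_quadrilateral hABC hADE hBDF hCEF hDEF hBCF hABD
      hD₀ hE₀ hF₀ hB₁ hC₁ hF₁
  refine ⟨q, hq₀, hq₁, ?_, ?_⟩
  · exact mem_sphere_of_complete_quadrilateral hABC hADE hBDF hCEF hDEF hBCF hACE
      hD₀ hE₀ hF₀ hB₁ hC₁ hF₁ hA₂ hC₂ hE₂ hq₀ hq₁ hqF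
  · exact mem_sphere_of_complete_quadrilateral (hABC.subset (by simp [Set.insert_subset_iff]))
      (hADE.subset (by simp [Set.insert_subset_iff])) hCEF hBDF
      (fun h ↦ hDEF (h.subset (by simp [Set.insert_subset_iff])))
      (fun h ↦ hBCF (h.subset (by simp [Set.insert_subset_iff]))) hABD
      hE₀ hD₀ hF₀ hC₁ hB₁ hF₁ hA₃ hB₃ hD₃ hq₀ hq₁ hqF

end TwoDim

theorem stmt_18_general (ℓ : Fin 4 → AffineSubspace ℝ (EuclideanSpace ℝ (Fin 2)))
    (hline : ∀ i, ∃ a b : EuclideanSpace ℝ (Fin 2), a ≠ b ∧ ℓ i = affineSpan ℝ {a, b})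
    (p : Fin 4 → Fin 4 → EuclideanSpace ℝ (Fin 2))
    (hmem : ∀ i j, i ≠ j → p i j ∈ ℓ i ∧ p i j ∈ ℓ j)
    (hgen : ∀ i j k, i ≠ j → i ≠ k → j ≠ k → p i j ∉ ℓ k)
    (c : Fin 4 → EuclideanSpace ℝ (Fin 2)) (r : Fin 4 → ℝ)
    (hcirc : ∀ i, ∀ m : Fin 3, dist (steinerVtx p i m) (c i) = r i) :
    ∃ q : EuclideanSpace ℝ (Fin 2), ∀ i, dist q (c i) = r i := by
  have : Fact (finrank ℝ (EuclideanSpace ℝ (Fin 2)) = 2) := ⟨finrank_euclideanSpace_fin⟩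
  have hcol : ∀ i {x y z}, x ∈ ℓ i → y ∈ ℓ i → z ∈ ℓ i → Collinear ℝ {x, y, z} := by
    intro i x y z hx hy hz
    obtain ⟨a, b, -, hab⟩ := hline i
    rw [hab] at hx hy hz
    exact collinear_triple_of_mem_affineSpan_pair hx hy hz
  have htri : ∀ j k l, j ≠ k → j ≠ l → k ≠ l → ¬Collinear ℝ {p j k, p j l, p k l} :=
    fun j k l hjk hjl hkl ↦ not_collinear_of_mem_of_notMem (hmem j k hjk).1 (hmem j l hjl).1
      (hgen k l j hkl hjk.symm hjl.symm)
      fun h ↦ hgen j k l hjk hjl hkl (h ▸ (hmem j l hjl).2)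
  -- `A, …, F` are `p 0 1, p 0 2, p 0 3, p 1 2, p 1 3, p 2 3`; `steinerVtx p i` lists the
  -- vertices of triangle `i` in the reverse of the lemma's order.
  obtain ⟨q, hq₀, hq₁, hq₂, hq₃⟩ := exists_mem_spheres_of_complete_quadrilateral
    (ω₀ := ⟨c 0, r 0⟩) (ω₁ := ⟨c 1, r 1⟩) (ω₂ := ⟨c 2, r 2⟩) (ω₃ := ⟨c 3, r 3⟩)
    (hcol 0 (hmem 0 1 (by decide)).1 (hmem 0 2 (by decide)).1 (hmem 0 3 (by decide)).1)
    (hcol 1 (hmem 0 1 (by decide)).2 (hmem 1 2 (by decide)).1 (hmem 1 3 (by decide)).1)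
    (hcol 2 (hmem 0 2 (by decide)).2 (hmem 1 2 (by decide)).2 (hmem 2 3 (by decide)).1)
    (hcol 3 (hmem 0 3 (by decide)).2 (hmem 1 3 (by decide)).2 (hmem 2 3 (by decide)).2)
    (htri 1 2 3 (by decide) (by decide) (by decide))
    (htri 0 2 3 (by decide) (by decide) (by decide))
    (htri 0 1 3 (by decide) (by decide) (by decide))
    (htri 0 1 2 (by decide) (by decide) (by decide))
    (hcirc 0 2) (hcirc 0 1) (hcirc 0 0) (hcirc 1 2) (hcirc 1 1) (hcirc 1 0)
    (hcirc 2 2) (hcirc 2 1) (hcirc 2 0) (hcirc 3 2) (hcirc 3 1) (hcirc 3 0)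
  refine ⟨q, fun i ↦ ?_⟩
  fin_cases i
  exacts [hq₀, hq₁, hq₂, hq₃]

/-- The Wallace–Steiner point theorem: given four lines in the Euclidean plane in general
position (no two parallel — so each pair meets in a point `p i j` — and no three concurrent),
any choice of circumcircles (centre `c i`, radius `r i`) through the three vertices of each of
the four triangles formed by the lines taken three at a time admits a common point `q`
lying on all four circles. -/
theorem stmt_18 (ℓ : Fin 4 → AffineSubspace ℝ (EuclideanSpace ℝ (Fin 2)))
    (hline : ∀ i, ∃ a b : EuclideanSpace ℝ (Fin 2), a ≠ b ∧ ℓ i = affineSpan ℝ {a, b})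
    (p : Fin 4 → Fin 4 → EuclideanSpace ℝ (Fin 2))
    (hsymm : ∀ i j, p i j = p j i)
    (hmem : ∀ i j, i ≠ j → p i j ∈ ℓ i ∧ p i j ∈ ℓ j)
    (hgen : ∀ i j k, i ≠ j → i ≠ k → j ≠ k → p i j ∉ ℓ k)
    (c : Fin 4 → EuclideanSpace ℝ (Fin 2)) (r : Fin 4 → ℝ)
    (hcirc : ∀ i, ∀ m : Fin 3, dist (steinerVtx p i m) (c i) = r i) :
    ∃ q : EuclideanSpace ℝ (Fin 2), ∀ i, dist q (c i) = r i :=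
  stmt_18_general ℓ hline p hmem hgen c r hcirc
end
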